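/- Scalar multiplication scales the d₁ distance homogeneously: for all S,T∈𝒯 and all α with −1≤α≤1, d₁(α⊙S, α⊙T) = |α|·d₁(S,T). -/

import Mathlib

/-! For `0 ≤ α` the maps `α ⊙ S` and `α ⊙ T` differ pointwise by `α (S - T)`, and for `α < 0`
by `α (T⁻¹ - S⁻¹)`, so it remains to show `d₁(S⁻¹, T⁻¹) = d₁(S, T)`. Both sides are the area of
the region of the square `𝒮 × 𝒮` lying below exactly one of the graphs of `S` and `T`: its
vertical slice over `x` has length `|S x - T x|`, and, since `y ≤ S x ↔ S⁻¹ y < x` off the single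
point `x = S⁻¹ y`, its horizontal slice at height `y` has length `|S⁻¹ y - T⁻¹ y|`. -/

open MeasureTheory ProbabilityTheory Filter Topology

noncomputable section

namespace ATM

/-- The space 𝒯 of transport maps on [s₁, s₂]: non-decreasing self-maps of
[s₁, s₂] fixing the endpoints. -/
def IsTransport (s₁ s₂ : ℝ) (T : ℝ → ℝ) : Prop :=
  MonotoneOn T (Set.Icc s₁ s₂) ∧ Set.MapsTo T (Set.Icc s₁ s₂) (Set.Icc s₁ s₂) ∧
    T s₁ = s₁ ∧ T s₂ = s₂

/-- Generalized (left-continuous) inverse T⁻¹(x) = inf{y ∈ [s₁,s₂] : T(y) ≥ x}. -/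
def geninv (s₁ s₂ : ℝ) (T : ℝ → ℝ) : ℝ → ℝ :=
  fun x => sInf {y | y ∈ Set.Icc s₁ s₂ ∧ x ≤ T y}

/-- L¹ distance d₁(S,T) = ∫_𝒮 |S-T| dλ. -/
def d1 (s₁ s₂ : ℝ) (S T : ℝ → ℝ) : ℝ := ∫ x in s₁..s₂, |S x - T x|

/-- L^q distance d_q(S,T) = (∫_𝒮 |S-T|^q dλ)^{1/q}. -/
def dq (s₁ s₂ q : ℝ) (S T : ℝ → ℝ) : ℝ := (∫ x in s₁..s₂, |S x - T x| ^ q) ^ (1 / q)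

/-- Sup distance d_∞(S,T) = sup_{x ∈ 𝒮} |S(x) - T(x)|. -/
def dinf (s₁ s₂ : ℝ) (S T : ℝ → ℝ) : ℝ := ⨆ x : Set.Icc s₁ s₂, |S x.1 - T x.1|

/-- Addition on 𝒯: T₁ ⊕ T₂ = T₂ ∘ T₁. -/
def oplus (T₁ T₂ : ℝ → ℝ) : ℝ → ℝ := T₂ ∘ T₁

/-- Scalar multiplication α ⊙ T for -1 ≤ α ≤ 1. -/
def oneSmul (s₁ s₂ α : ℝ) (T : ℝ → ℝ) : ℝ → ℝ := fun x =>
  if 0 < α then x + α * (T x - x)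
  else if α = 0 then x
  else x + α * (x - geninv s₁ s₂ T x)

/-- Scalar multiplication α ⊙ T for general α, via b = ⌊|α|⌋, a = |α| - b. -/
def odot (s₁ s₂ α : ℝ) (T : ℝ → ℝ) : ℝ → ℝ :=
  if |α| ≤ 1 then oneSmul s₁ s₂ α T
  else if 0 < α then (oneSmul s₁ s₂ (Int.fract α) T) ∘ T^[(⌊α⌋).toNat]
  else (oneSmul s₁ s₂ (Int.fract |α|) (geninv s₁ s₂ T)) ∘ (geninv s₁ s₂ T)^[(⌊|α|⌋).toNat]

variable {Ω : Type*}

/-- φ_e(S) = α ⊙ S ⊕ e = e ∘ (α ⊙ S). -/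
def phi (s₁ s₂ α : ℝ) (e S : ℝ → ℝ) : ℝ → ℝ := e ∘ odot s₁ s₂ α S

/-- Iterated random maps φ̃_{i,m}(S) = φ_{ε_i} ∘ ⋯ ∘ φ_{ε_{i-m+1}}(S). -/
def phiIter (s₁ s₂ α : ℝ) (ε : ℤ → Ω → ℝ → ℝ) : ℕ → ℤ → (ℝ → ℝ) → Ω → ℝ → ℝ
  | 0, _, S, _ => S
  | m + 1, i, S, ω => phi s₁ s₂ α (ε i ω) (phiIter s₁ s₂ α ε m (i - 1) S ω)

/-- Concurrent scalar multiplication β ⊛ T for β : 𝒮 → [-1,1]. -/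
def bsmul (s₁ s₂ : ℝ) (β T : ℝ → ℝ) : ℝ → ℝ := fun x =>
  if 0 < β x then x + β x * (T x - x)
  else if β x = 0 then x
  else x + β x * (x - geninv s₁ s₂ T x)

/-- φ_e(S) = β ⊛ S ⊕ e for the concurrent model. -/
def cphi (s₁ s₂ : ℝ) (β e S : ℝ → ℝ) : ℝ → ℝ := e ∘ bsmul s₁ s₂ β S

/-- Iterated random maps for the concurrent model. -/
def cphiIter (s₁ s₂ : ℝ) (β : ℝ → ℝ) (ε : ℤ → Ω → ℝ → ℝ) : ℕ → ℤ → (ℝ → ℝ) → Ω → ℝ → ℝ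
  | 0, _, S, _ => S
  | m + 1, i, S, ω => cphi s₁ s₂ β (ε i ω) (cphiIter s₁ s₂ β ε m (i - 1) S ω)

/-- The chain α_p ⊙ S₁ ⊕ α_{p-1} ⊙ S₂ ⊕ ⋯ ⊕ α₁ ⊙ S_p, where `a k` denotes α_{k+1}
and `S k` denotes S_{k+1} (0-based). Since A ⊕ B = B ∘ A, the map α_p ⊙ S₁ acts first. -/
def atmChain (s₁ s₂ : ℝ) {p : ℕ} (a : Fin p → ℝ) (S : Fin p → ℝ → ℝ) : ℝ → ℝ :=
  fun x => Fin.foldl p (fun y k => odot s₁ s₂ (a k.rev) (S k) y) x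

/-- Υ_e(𝐒) = (S₂, …, S_p, α_p ⊙ S₁ ⊕ ⋯ ⊕ α₁ ⊙ S_p ⊕ e). -/
def upsilon (s₁ s₂ : ℝ) {p : ℕ} (a : Fin p → ℝ) (e : ℝ → ℝ) (S : Fin p → ℝ → ℝ) :
    Fin p → ℝ → ℝ :=
  fun j => if h : (j : ℕ) + 1 < p then S ⟨(j : ℕ) + 1, h⟩ else e ∘ atmChain s₁ s₂ a S

/-- Iterated random maps Υ̃_{i,m}(𝐒) = Υ_{ε_i} ∘ ⋯ ∘ Υ_{ε_{i-m+1}}(𝐒). -/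
def upsilonIter (s₁ s₂ : ℝ) {p : ℕ} (a : Fin p → ℝ) (ε : ℤ → Ω → ℝ → ℝ) :
    ℕ → ℤ → (Fin p → ℝ → ℝ) → Ω → Fin p → ℝ → ℝ
  | 0, _, S, _ => S
  | m + 1, i, S, ω => upsilon s₁ s₂ a (ε i ω) (upsilonIter s₁ s₂ a ε m (i - 1) S ω)

/-- Product L^q metric on 𝒯^p. -/
def dqProd (s₁ s₂ q : ℝ) {p : ℕ} (S R : Fin p → ℝ → ℝ) : ℝ :=
  Real.sqrt (∑ k, (dq s₁ s₂ q (S k) (R k)) ^ 2)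

/-- Product L¹ metric on 𝒯^p. -/
def d1Prod (s₁ s₂ : ℝ) {p : ℕ} (S R : Fin p → ℝ → ℝ) : ℝ :=
  Real.sqrt (∑ k, (d1 s₁ s₂ (S k) (R k)) ^ 2)

/-- Joint measurability of a random function. -/
def JM [MeasurableSpace Ω] (f : Ω → ℝ → ℝ) : Prop :=
  Measurable fun q : Ω × ℝ => f q.1 q.2

/-- (ε_i)_{i ∈ ℤ} are i.i.d. random elements. -/
def IID [MeasurableSpace Ω] (P : Measure Ω) (ε : ℤ → Ω → ℝ → ℝ) : Prop :=
  iIndepFun ε P ∧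
    ∀ i j : ℤ, Measure.map (ε i) P = Measure.map (ε j) P

/-- Stationarity of a ℤ-indexed function-valued process: shift invariance of the joint law. -/
def Stationary [MeasurableSpace Ω] (P : Measure Ω) (X : ℤ → Ω → ℝ → ℝ) : Prop :=
  Measure.map (fun ω => fun i : ℤ => X (i + 1) ω) P =
    Measure.map (fun ω => fun i : ℤ => X i ω) P

/-- Completeness of a class of maps under the sup metric d_∞ on [s₁,s₂]. -/
def CompleteUnder (s₁ s₂ : ℝ) (TT : Set (ℝ → ℝ)) : Prop :=
  ∀ f : ℕ → ℝ → ℝ, (∀ n, f n ∈ TT) →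
    (∀ δ : ℝ, 0 < δ → ∃ N, ∀ m ≥ N, ∀ n ≥ N, dinf s₁ s₂ (f m) (f n) < δ) →
    ∃ g ∈ TT, Tendsto (fun n => dinf s₁ s₂ (f n) g) atTop (𝓝 0)

/-- Bi-Lipschitz with constant K on [s₁,s₂]. -/
def BiLipschitzOn (s₁ s₂ K : ℝ) (T : ℝ → ℝ) : Prop :=
  ∀ x ∈ Set.Icc s₁ s₂, ∀ y ∈ Set.Icc s₁ s₂,
    K⁻¹ * |x - y| ≤ |T x - T y| ∧ |T x - T y| ≤ K * |x - y|

/-- Empirical least-squares criterion l₊. -/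
def lplusD (s₁ s₂ : ℝ) (F : ℕ → ℝ → ℝ) (n : ℕ) (a : ℝ) : ℝ :=
  ∑ i ∈ Finset.Icc 2 n, ∫ x in s₁..s₂, (F i x - x - a * (F (i - 1) x - x)) ^ 2

/-- Empirical least-squares criterion l₋. -/
def lminusD (s₁ s₂ : ℝ) (F : ℕ → ℝ → ℝ) (n : ℕ) (a : ℝ) : ℝ :=
  ∑ i ∈ Finset.Icc 2 n, ∫ x in s₁..s₂,
    (F i x - x - a * (x - geninv s₁ s₂ (F (i - 1)) x)) ^ 2

/-- Empirical autocovariance ρ̂¹₊. -/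
def rho1pD (s₁ s₂ : ℝ) (F : ℕ → ℝ → ℝ) (n : ℕ) : ℝ :=
  (1 / ((n : ℝ) - 1)) * ∑ i ∈ Finset.Icc 2 n, ∫ x in s₁..s₂, (F i x - x) * (F (i - 1) x - x)

/-- Empirical autocovariance ρ̂¹₋. -/
def rho1mD (s₁ s₂ : ℝ) (F : ℕ → ℝ → ℝ) (n : ℕ) : ℝ :=
  (1 / ((n : ℝ) - 1)) * ∑ i ∈ Finset.Icc 2 n, ∫ x in s₁..s₂,
    (F i x - x) * (x - geninv s₁ s₂ (F (i - 1)) x)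

/-- Empirical second moment ρ̂⁰₊. -/
def rho0pD (s₁ s₂ : ℝ) (F : ℕ → ℝ → ℝ) (n : ℕ) : ℝ :=
  (1 / ((n : ℝ) - 1)) * ∑ i ∈ Finset.Icc 2 n, ∫ x in s₁..s₂, (F (i - 1) x - x) ^ 2

/-- Empirical second moment ρ̂⁰₋. -/
def rho0mD (s₁ s₂ : ℝ) (F : ℕ → ℝ → ℝ) (n : ℕ) : ℝ :=
  (1 / ((n : ℝ) - 1)) * ∑ i ∈ Finset.Icc 2 n, ∫ x in s₁..s₂,
    (x - geninv s₁ s₂ (F (i - 1)) x) ^ 2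

/-- Pointwise least-squares criterion l₊(·|x). -/
def lplusPt (F : ℕ → ℝ → ℝ) (n : ℕ) (x a : ℝ) : ℝ :=
  ∑ i ∈ Finset.Icc 2 n, (F i x - x - a * (F (i - 1) x - x)) ^ 2

/-- Pointwise least-squares criterion l₋(·|x). -/
def lminusPt (s₁ s₂ : ℝ) (F : ℕ → ℝ → ℝ) (n : ℕ) (x a : ℝ) : ℝ :=
  ∑ i ∈ Finset.Icc 2 n, (F i x - x - a * (x - geninv s₁ s₂ (F (i - 1)) x)) ^ 2

/-- Pointwise empirical autocovariance ρ̂¹₊(x). -/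
def rho1pPt (F : ℕ → ℝ → ℝ) (n : ℕ) (x : ℝ) : ℝ :=
  (1 / ((n : ℝ) - 1)) * ∑ i ∈ Finset.Icc 2 n, (F i x - x) * (F (i - 1) x - x)

/-- Pointwise empirical autocovariance ρ̂¹₋(x). -/
def rho1mPt (s₁ s₂ : ℝ) (F : ℕ → ℝ → ℝ) (n : ℕ) (x : ℝ) : ℝ :=
  (1 / ((n : ℝ) - 1)) * ∑ i ∈ Finset.Icc 2 n, (F i x - x) * (x - geninv s₁ s₂ (F (i - 1)) x)

/-- Pointwise empirical second moment ρ̂⁰₊(x). -/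
def rho0pPt (F : ℕ → ℝ → ℝ) (n : ℕ) (x : ℝ) : ℝ :=
  (1 / ((n : ℝ) - 1)) * ∑ i ∈ Finset.Icc 2 n, (F (i - 1) x - x) ^ 2

/-- Pointwise empirical second moment ρ̂⁰₋(x). -/
def rho0mPt (s₁ s₂ : ℝ) (F : ℕ → ℝ → ℝ) (n : ℕ) (x : ℝ) : ℝ :=
  (1 / ((n : ℝ) - 1)) * ∑ i ∈ Finset.Icc 2 n, (x - geninv s₁ s₂ (F (i - 1)) x) ^ 2

end ATM

open Set
open scoped symmDiff Interval

namespace Set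

theorem Iic_symmDiff_Iic {α : Type*} [LinearOrder α] (a b : α) : Iic a ∆ Iic b = Ι a b := by
  ext x
  simp only [mem_symmDiff, mem_Iic, mem_uIoc, not_le]
  tauto

theorem Ioi_symmDiff_Ioi {α : Type*} [LinearOrder α] (a b : α) : Ioi a ∆ Ioi b = Ι a b := by
  rw [← compl_Iic, ← compl_Iic, compl_symmDiff_compl, Iic_symmDiff_Iic]

end Set

theorem volume_restrict_Icc_uIoc {s₁ s₂ a b : ℝ} (ha : a ∈ Icc s₁ s₂) (hb : b ∈ Icc s₁ s₂) :
    volume.restrict (Icc s₁ s₂) (Ι a b) = ENNReal.ofReal |b - a| := by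
  rw [Measure.restrict_apply measurableSet_uIoc,
    inter_eq_left.mpr (uIoc_subset_uIcc.trans (uIcc_subset_Icc ha hb)), Real.volume_uIoc]

/-- Cavalieri's principle for the region between the graphs of `f` and `g`. -/
theorem lintegral_measure_Iic_symmDiff_Iic {α : Type*} [MeasurableSpace α] {μ : Measure α}
    {ν : Measure ℝ} [SFinite μ] [SFinite ν] {f g : α → ℝ}
    (hf : AEMeasurable f μ) (hg : AEMeasurable g μ) :
    ∫⁻ x, ν (Iic (f x) ∆ Iic (g x)) ∂μ = ∫⁻ y, μ ({x | y ≤ f x} ∆ {x | y ≤ g x}) ∂ν := by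
  have hx : ∀ᵐ x ∂μ, ν (Iic (f x) ∆ Iic (g x)) = ν (Iic (hf.mk f x) ∆ Iic (hg.mk g x)) := by
    filter_upwards [hf.ae_eq_mk, hg.ae_eq_mk] with x hfx hgx
    rw [hfx, hgx]
  have hy : ∀ y, μ ({x | y ≤ f x} ∆ {x | y ≤ g x}) =
      μ ({x | y ≤ hf.mk f x} ∆ {x | y ≤ hg.mk g x}) := fun y =>
    measure_congr <| EventuallyEq.symmDiff
      (eventuallyEq_set.mpr (by filter_upwards [hf.ae_eq_mk] with x hfx; rw [hfx]))
      (eventuallyEq_set.mpr (by filter_upwards [hg.ae_eq_mk] with x hgx; rw [hgx]))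
  rw [lintegral_congr_ae hx, lintegral_congr hy]
  have hD : MeasurableSet ({p : α × ℝ | p.2 ≤ hf.mk f p.1} ∆ {p | p.2 ≤ hg.mk g p.1}) :=
    (measurableSet_le measurable_snd (hf.measurable_mk.comp measurable_fst)).symmDiff
      (measurableSet_le measurable_snd (hg.measurable_mk.comp measurable_fst))
  exact (Measure.prod_apply hD).symm.trans (Measure.prod_apply_symm hD)

namespace ATM

theorem d1_eq_toReal_lintegral {s₁ s₂ : ℝ} (hs : s₁ ≤ s₂) {S T : ℝ → ℝ}
    (hS : AEMeasurable S (volume.restrict (Icc s₁ s₂)))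
    (hT : AEMeasurable T (volume.restrict (Icc s₁ s₂))) :
    d1 s₁ s₂ S T = (∫⁻ x in Icc s₁ s₂, ENNReal.ofReal |S x - T x|).toReal := by
  rw [d1, intervalIntegral.integral_of_le hs, ← integral_Icc_eq_integral_Ioc]
  exact integral_eq_lintegral_of_nonneg_ae (Eventually.of_forall fun x => abs_nonneg _)
    (hS.sub hT).abs.aestronglyMeasurable

section geninv

variable {s₁ s₂ : ℝ} {T : ℝ → ℝ} {x y : ℝ}

theorem geninv_le_of_le_apply (hx : x ∈ Icc s₁ s₂) (hy : y ≤ T x) : geninv s₁ s₂ T y ≤ x :=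
  csInf_le ⟨s₁, fun _ hz => hz.1.1⟩ ⟨hx, hy⟩

theorem IsTransport.nonempty_setOf_le_apply (hT : IsTransport s₁ s₂ T) (hs : s₁ ≤ s₂)
    (hy : y ≤ s₂) : {z | z ∈ Icc s₁ s₂ ∧ y ≤ T z}.Nonempty :=
  ⟨s₂, right_mem_Icc.mpr hs, hT.2.2.2.symm ▸ hy⟩

theorem IsTransport.geninv_mem (hT : IsTransport s₁ s₂ T) (hs : s₁ ≤ s₂) (hy : y ≤ s₂) :
    geninv s₁ s₂ T y ∈ Icc s₁ s₂ :=
  ⟨le_csInf (hT.nonempty_setOf_le_apply hs hy) fun _ hz => hz.1.1,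
    geninv_le_of_le_apply (right_mem_Icc.mpr hs) (hT.2.2.2.symm ▸ hy)⟩

theorem IsTransport.monotoneOn_geninv (hT : IsTransport s₁ s₂ T) (hs : s₁ ≤ s₂) :
    MonotoneOn (geninv s₁ s₂ T) (Iic s₂) := fun _ _ _ hb hab =>
  csInf_le_csInf ⟨s₁, fun _ hz => hz.1.1⟩ (hT.nonempty_setOf_le_apply hs hb)
    fun _ hz => ⟨hz.1, hab.trans hz.2⟩

theorem IsTransport.le_apply_of_geninv_lt (hT : IsTransport s₁ s₂ T) (hs : s₁ ≤ s₂)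
    (hx : x ∈ Icc s₁ s₂) (hy : y ≤ s₂) (h : geninv s₁ s₂ T y < x) : y ≤ T x := by
  obtain ⟨z, ⟨hz, hyz⟩, hzx⟩ := exists_lt_of_csInf_lt (hT.nonempty_setOf_le_apply hs hy) h
  exact hyz.trans (hT.1 hz hx hzx.le)

theorem IsTransport.ae_le_apply_iff_geninv_lt (hT : IsTransport s₁ s₂ T) (hs : s₁ ≤ s₂)
    (hy : y ≤ s₂) : ∀ᵐ x ∂volume.restrict (Icc s₁ s₂), y ≤ T x ↔ geninv s₁ s₂ T y < x := by
  filter_upwards [ae_restrict_mem measurableSet_Icc,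
    ae_restrict_of_ae (volume.ae_ne (geninv s₁ s₂ T y))] with x hx hne
  exact ⟨fun h => (geninv_le_of_le_apply hx h).lt_of_ne hne.symm,
    hT.le_apply_of_geninv_lt hs hx hy⟩

end geninv

theorem IsTransport.d1_geninv {s₁ s₂ : ℝ} (hs : s₁ ≤ s₂) {S T : ℝ → ℝ}
    (hS : IsTransport s₁ s₂ S) (hT : IsTransport s₁ s₂ T) :
    d1 s₁ s₂ (geninv s₁ s₂ S) (geninv s₁ s₂ T) = d1 s₁ s₂ S T := by
  set I := Icc s₁ s₂
  set μ := volume.restrict I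
  have hmeas {R : ℝ → ℝ} (hR : IsTransport s₁ s₂ R) :
      AEMeasurable R μ ∧ AEMeasurable (geninv s₁ s₂ R) μ :=
    ⟨aemeasurable_restrict_of_monotoneOn measurableSet_Icc hR.1,
      aemeasurable_restrict_of_monotoneOn measurableSet_Icc
        ((hR.monotoneOn_geninv hs).mono Icc_subset_Iic_self)⟩
  rw [d1_eq_toReal_lintegral hs (hmeas hS).2 (hmeas hT).2,
    d1_eq_toReal_lintegral hs (hmeas hS).1 (hmeas hT).1]
  congr 1
  calc ∫⁻ y in I, ENNReal.ofReal |geninv s₁ s₂ S y - geninv s₁ s₂ T y|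
      = ∫⁻ y in I, μ ({x | y ≤ S x} ∆ {x | y ≤ T x}) := by
        refine setLIntegral_congr_fun measurableSet_Icc fun y hy => ?_
        have hae : ({x | y ≤ S x} ∆ {x | y ≤ T x} : Set ℝ) =ᵐ[μ]
            (Ioi (geninv s₁ s₂ S y) ∆ Ioi (geninv s₁ s₂ T y) : Set ℝ) :=
          (eventuallyEq_set.mpr (hS.ae_le_apply_iff_geninv_lt hs hy.2)).symmDiff
            (eventuallyEq_set.mpr (hT.ae_le_apply_iff_geninv_lt hs hy.2))
        rw [measure_congr hae, Ioi_symmDiff_Ioi,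
          volume_restrict_Icc_uIoc (hS.geninv_mem hs hy.2) (hT.geninv_mem hs hy.2), abs_sub_comm]
    _ = ∫⁻ x in I, μ (Iic (S x) ∆ Iic (T x)) :=
        (lintegral_measure_Iic_symmDiff_Iic (hmeas hS).1 (hmeas hT).1).symm
    _ = ∫⁻ x in I, ENNReal.ofReal |S x - T x| := by
        refine setLIntegral_congr_fun measurableSet_Icc fun x hx => ?_
        rw [Iic_symmDiff_Iic, volume_restrict_Icc_uIoc (hS.2.1 hx) (hT.2.1 hx), abs_sub_comm]

theorem d1_oneSmul_of_pos {s₁ s₂ α : ℝ} (hα : 0 < α) (S T : ℝ → ℝ) :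
    d1 s₁ s₂ (oneSmul s₁ s₂ α S) (oneSmul s₁ s₂ α T) = |α| * d1 s₁ s₂ S T := by
  simp only [d1, oneSmul, if_pos hα, ← intervalIntegral.integral_const_mul, ← abs_mul]
  congr with x
  ring_nf

theorem d1_oneSmul_of_neg {s₁ s₂ α : ℝ} (hα : α < 0) (S T : ℝ → ℝ) :
    d1 s₁ s₂ (oneSmul s₁ s₂ α S) (oneSmul s₁ s₂ α T) =
      |α| * d1 s₁ s₂ (geninv s₁ s₂ S) (geninv s₁ s₂ T) := by
  simp only [d1, oneSmul, if_neg hα.not_gt, if_neg hα.ne, ← intervalIntegral.integral_const_mul,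
    ← abs_mul]
  congr with x
  rw [← abs_neg]
  ring_nf

/-- Scalar multiplication scales the d₁ distance homogeneously: for -1 ≤ α ≤ 1,
d₁(α ⊙ S, α ⊙ T) = |α| d₁(S, T). -/
theorem d1_odot_homogeneous (s₁ s₂ : ℝ) (hs : s₁ < s₂) (S T : ℝ → ℝ)
    (hS : IsTransport s₁ s₂ S) (hT : IsTransport s₁ s₂ T)
    (α : ℝ) (hα : α ∈ Set.Icc (-1 : ℝ) 1) :
    d1 s₁ s₂ (odot s₁ s₂ α S) (odot s₁ s₂ α T) = |α| * d1 s₁ s₂ S T := by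
  rw [odot, odot, if_pos (abs_le.mpr hα), if_pos (abs_le.mpr hα)]
  rcases lt_trichotomy α 0 with hneg | rfl | hpos
  · rw [d1_oneSmul_of_neg hneg, IsTransport.d1_geninv hs.le hS hT]
  · simp [d1, oneSmul]
  · exact d1_oneSmul_of_pos hpos S T

end ATM
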